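/- Let G = (V, E) be an undirected multigraph with terminal set T ⊆ V. Then there exists a finite sequence of element-connectivity preserving reduction operations (each deleting or contracting an edge joining two non-terminals while leaving all pairwise element-connectivities between terminals unchanged) transforming G into a multigraph G' in which the set of non-terminal vertices is an independent set (no edge of G' joins two non-terminals), and κ'_{(G',T)}(u,v) = κ'_{(G,T)}(u,v) for all distinct u, v ∈ T. -/

import Mathlib

/-!
Every element-connectivity instance can be reduced, by a finite sequence of
element-connectivity preserving deletions and contractions of edges between
non-terminals, to a graph in which the non-terminals form an independent set.

A multigraph on `V` is a finite multiset `E : Multiset (Sym2 V)` of unordered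
pairs of distinct vertices.  Contracting an edge `pq` identifies `q` with `p`
(the merged vertex keeps the name `p`; the old name `q` remains as an isolated
vertex), keeping all other edges.
-/

attribute [local instance] Classical.propDecidable

noncomputable section

/-- One adjacency step in the multigraph `E`, avoiding the deleted vertex set `Fv`. -/
def Adj {V : Type*} (E : Multiset (Sym2 V)) (Fv : Set V) (a b : V) : Prop :=
  s(a, b) ∈ E ∧ a ∉ Fv ∧ b ∉ Fv

/-- `u` and `v` lie in the same connected component of `E` after deleting the
vertices in `Fv`. -/
def Connects {V : Type*} (E : Multiset (Sym2 V)) (Fv : Set V) (u v : V) : Prop :=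
  Relation.ReflTransGen (Adj E Fv) u v

/-- Element-connectivity `κ'_{(G,T)}(u,v)`: minimum cardinality of a set
`F = Fv ∪ Fe` of non-terminal vertices and edges whose deletion disconnects
`u` from `v`. -/
def elemConn {V : Type*} (E : Multiset (Sym2 V)) (T : Set V) (u v : V) : ℕ :=
  sInf {n | ∃ (Fv : Finset V) (Fe : Multiset (Sym2 V)), (↑Fv : Set V) ⊆ Tᶜ ∧ Fe ≤ E ∧
    n = Fv.card + Multiset.card Fe ∧ ¬ Connects (E - Fe) (↑Fv) u v}

/-- The map identifying `q` with `p`. -/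
def collapse {V : Type*} [DecidableEq V] (p q : V) : V → V :=
  fun x => if x = q then p else x

/-- Contraction of the edge `pq`: identify `p` and `q` (into `p`), keep all other
edges (parallel edges may arise; copies of `pq` become loops and are discarded). -/
def contractE {V : Type*} [DecidableEq V] (E : Multiset (Sym2 V)) (p q : V) :
    Multiset (Sym2 V) :=
  (E.map (Sym2.map (collapse p q))).filter (fun e => ¬ e.IsDiag)

/-- An element-connectivity preserving reduction operation: delete or contract an edge
joining two non-terminals so that all pairwise element-connectivities between
terminals are unchanged. -/
inductive RedStepM {V : Type*} [DecidableEq V] (T : Set V) :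
    Multiset (Sym2 V) → Multiset (Sym2 V) → Prop
  | del (E : Multiset (Sym2 V)) (p q : V)
      (hp : p ∉ T) (hq : q ∉ T) (hpq : p ≠ q) (he : s(p, q) ∈ E)
      (hpres : ∀ u ∈ T, ∀ v ∈ T, u ≠ v →
        elemConn (E.erase s(p, q)) T u v = elemConn E T u v) :
      RedStepM T E (E.erase s(p, q))
  | contr (E : Multiset (Sym2 V)) (p q : V)
      (hp : p ∉ T) (hq : q ∉ T) (hpq : p ≠ q) (he : s(p, q) ∈ E)
      (hpres : ∀ u ∈ T, ∀ v ∈ T, u ≠ v →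
        elemConn (contractE E p q) T u v = elemConn E T u v) :
      RedStepM T E (contractE E p q)


section Development
variable {V : Type*}

lemma adj_symm {E : Multiset (Sym2 V)} {Fv : Set V} {a b : V} (h : Adj E Fv a b) :
    Adj E Fv b a := by
  obtain ⟨h1, h2, h3⟩ := h
  exact ⟨by rwa [Sym2.eq_swap], h3, h2⟩

lemma connects_symm {E : Multiset (Sym2 V)} {Fv : Set V} {u v : V}
    (h : Connects E Fv u v) : Connects E Fv v u :=
  by
    haveI : Std.Symm (Adj E Fv) := ⟨fun _ _ => adj_symm⟩
    exact Std.Symm.symm (r := Relation.ReflTransGen (Adj E Fv)) _ _ h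

lemma connects_mono {E₁ E₂ : Multiset (Sym2 V)} {Fv₁ Fv₂ : Set V} {u v : V}
    (hE : ∀ g, g ∈ E₁ → g ∈ E₂) (hv : Fv₂ ⊆ Fv₁) (h : Connects E₁ Fv₁ u v) :
    Connects E₂ Fv₂ u v :=
  Relation.ReflTransGen.mono (r := Adj E₁ Fv₁) (p := Adj E₂ Fv₂)
    (fun a b (hab : Adj E₁ Fv₁ a b) => ⟨hE _ hab.1, fun hc => hab.2.1 (hv hc), fun hc => hab.2.2 (hv hc)⟩) u v h

lemma connects_congr {E₁ E₂ : Multiset (Sym2 V)} {Fv : Set V} {u v : V}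
    (hE : ∀ g, g ∈ E₁ ↔ g ∈ E₂) :
    Connects E₁ Fv u v ↔ Connects E₂ Fv u v :=
  ⟨connects_mono (fun g h => (hE g).1 h) le_rfl,
   connects_mono (fun g h => (hE g).2 h) le_rfl⟩

lemma not_connects_zero {Fv : Set V} {u v : V} (huv : u ≠ v) :
    ¬ Connects (0 : Multiset (Sym2 V)) Fv u v := by
  intro h
  induction h with
  | refl => exact huv rfl
  | tail _ hstep _ => exact absurd hstep.1 (Multiset.notMem_zero _)

/-- the defining set of `elemConn` -/
def cutSet (E : Multiset (Sym2 V)) (T : Set V) (u v : V) : Set ℕ :=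
  {n | ∃ (Fv : Finset V) (Fe : Multiset (Sym2 V)), (↑Fv : Set V) ⊆ Tᶜ ∧ Fe ≤ E ∧
    n = Fv.card + Multiset.card Fe ∧ ¬ Connects (E - Fe) (↑Fv) u v}

lemma elemConn_eq_sInf (E : Multiset (Sym2 V)) (T : Set V) (u v : V) :
    elemConn E T u v = sInf (cutSet E T u v) := rfl

lemma cutSet_nonempty (E : Multiset (Sym2 V)) (T : Set V) {u v : V} (huv : u ≠ v) :
    (cutSet E T u v).Nonempty := by
  refine ⟨Multiset.card E, ∅, E, by simp, le_rfl, by simp, ?_⟩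
  have : E - E = 0 := by
    ext g; simp [Multiset.count_sub]
  rw [this]
  exact fun h => not_connects_zero huv h

lemma elemConn_le_of_cut {E : Multiset (Sym2 V)} {T : Set V} {u v : V}
    {Fv : Finset V} {Fe : Multiset (Sym2 V)} (h1 : (↑Fv : Set V) ⊆ Tᶜ) (h2 : Fe ≤ E)
    (h3 : ¬ Connects (E - Fe) (↑Fv) u v) :
    elemConn E T u v ≤ Fv.card + Multiset.card Fe :=
  Nat.sInf_le ⟨Fv, Fe, h1, h2, rfl, h3⟩

lemma exists_mincut (E : Multiset (Sym2 V)) (T : Set V) {u v : V} (huv : u ≠ v) :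
    ∃ (Fv : Finset V) (Fe : Multiset (Sym2 V)), (↑Fv : Set V) ⊆ Tᶜ ∧ Fe ≤ E ∧
      elemConn E T u v = Fv.card + Multiset.card Fe ∧ ¬ Connects (E - Fe) (↑Fv) u v :=
  Nat.sInf_mem (cutSet_nonempty E T huv)

/-- a min cut can be chosen *saturated*: each edge value is either fully deleted
or not deleted at all. -/
lemma exists_saturated_mincut (E : Multiset (Sym2 V)) (T : Set V) {u v : V} (huv : u ≠ v) :
    ∃ (Fv : Finset V) (Fe : Multiset (Sym2 V)), (↑Fv : Set V) ⊆ Tᶜ ∧ Fe ≤ E ∧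
      elemConn E T u v = Fv.card + Multiset.card Fe ∧ ¬ Connects (E - Fe) (↑Fv) u v ∧
      ∀ g, Multiset.count g Fe = 0 ∨ Multiset.count g Fe = Multiset.count g E := by
  obtain ⟨Fv, Fe, h1, h2, h3, h4⟩ := exists_mincut E T (u := u) (v := v) huv
  set Fe' := Fe.filter (fun g => Multiset.count g Fe = Multiset.count g E) with hFe'
  have hle : Fe' ≤ Fe := Multiset.filter_le _ _
  have hcnt : ∀ g, Multiset.count g Fe' =
      if Multiset.count g Fe = Multiset.count g E then Multiset.count g Fe else 0 := by
    intro g; simp [hFe', Multiset.count_filter]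
  have hmem : ∀ g, g ∈ E - Fe' ↔ g ∈ E - Fe := by
    intro g
    rw [← Multiset.count_pos, ← Multiset.count_pos, Multiset.count_sub, Multiset.count_sub,
      hcnt g]
    have := Multiset.count_le_of_le g h2
    split_ifs with h
    · omega
    · omega
  have h4' : ¬ Connects (E - Fe') (↑Fv) u v := fun h => h4 (connects_mono (fun g => (hmem g).1) le_rfl h)
  have hcard : Fv.card + Multiset.card Fe' = elemConn E T u v := by
    have hle1 : elemConn E T u v ≤ Fv.card + Multiset.card Fe' :=
      elemConn_le_of_cut h1 (hle.trans h2) h4'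
    have hle2 : Multiset.card Fe' ≤ Multiset.card Fe := Multiset.card_le_card hle
    omega
  refine ⟨Fv, Fe', h1, hle.trans h2, hcard.symm, h4', ?_⟩
  intro g
  rw [hcnt g]
  split_ifs with h
  · right; rw [h]
  · left; rfl

lemma elemConn_comm (E : Multiset (Sym2 V)) (T : Set V) (u v : V) :
    elemConn E T u v = elemConn E T v u := by
  unfold elemConn
  congr 1
  ext n
  constructor <;>
  · rintro ⟨Fv, Fe, h1, h2, h3, h4⟩
    exact ⟨Fv, Fe, h1, h2, h3, fun h => h4 (connects_symm h)⟩



section Collapse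
variable {V : Type*} [DecidableEq V]

lemma collapse_q {p q : V} : collapse p q q = p := by simp [collapse]
lemma collapse_ne {p q z : V} (h : z ≠ q) : collapse p q z = z := by simp [collapse, h]
lemma collapse_mem {p q z : V} : collapse p q z = z ∨ collapse p q z = p := by
  by_cases h : z = q
  · right; rw [h, collapse_q]
  · left; exact collapse_ne h
lemma collapse_eq_of_ne {p q z a : V} (h : collapse p q z = a) (ha : a ≠ p) : z = a := by
  rcases collapse_mem (p := p) (q := q) (z := z) with h' | h'
  · rw [← h, h']
  · exact absurd (h' ▸ h) (Ne.symm ha).elim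
lemma collapse_eq_p {p q z : V} (hpq : p ≠ q) (h : collapse p q z = p) : z = p ∨ z = q := by
  by_cases hz : z = q
  · right; exact hz
  · left; rwa [collapse_ne hz] at h
lemma collapse_inj {p q z₁ z₂ : V} (h : collapse p q z₁ = collapse p q z₂) (hne : z₁ ≠ z₂) :
    (z₁ = p ∧ z₂ = q) ∨ (z₁ = q ∧ z₂ = p) := by
  by_cases h1 : z₁ = q <;> by_cases h2 : z₂ = q
  · exact absurd (h1.trans h2.symm) hne
  · right
    rw [h1, collapse_q, collapse_ne h2] at h
    exact ⟨h1, h.symm⟩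
  · left
    rw [h2, collapse_q, collapse_ne h1] at h
    exact ⟨h, h2⟩
  · rw [collapse_ne h1, collapse_ne h2] at h
    exact absurd h hne

lemma sym2_map_decomp {c : V → V} {f : Sym2 V} {a b : V} (h : Sym2.map c f = s(a, b)) :
    ∃ a' b', f = s(a', b') ∧ c a' = a ∧ c b' = b := by
  induction f using Sym2.ind with
  | _ x y =>
    rw [Sym2.map_pair_eq, Sym2.eq_iff] at h
    rcases h with ⟨h1, h2⟩ | ⟨h1, h2⟩
    · exact ⟨x, y, rfl, h1, h2⟩
    · exact ⟨y, x, Sym2.eq_swap, h2, h1⟩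

lemma q_not_in_contractE {E : Multiset (Sym2 V)} {p q : V} (hpq : p ≠ q) :
    ∀ g ∈ contractE E p q, q ∉ g := by
  intro g hg hq
  rw [contractE, Multiset.mem_filter, Multiset.mem_map] at hg
  obtain ⟨⟨f, hf, rfl⟩, _⟩ := hg
  obtain ⟨z, hz, hzq⟩ := Sym2.mem_map.mp hq
  rcases collapse_mem (p := p) (q := q) (z := z) with h | h
  · rw [h] at hzq
    subst hzq
    rw [collapse_q] at h
    exact hpq h
  · rw [h] at hzq; exact hpq hzq

/-- key counting lemma: membership in a difference of images lifts. -/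
lemma mem_map_sub {α β : Type*} [DecidableEq α] [DecidableEq β]
    {E Fe : Multiset α} (c : α → β) {g : β}
    (h : Multiset.count g (Multiset.map c Fe) < Multiset.count g (Multiset.map c E)) :
    ∃ f, c f = g ∧ f ∈ E - Fe := by
  by_contra hcon
  push_neg at hcon
  have : ∀ f, c f = g → Multiset.count f E ≤ Multiset.count f Fe := by
    intro f hf
    have := hcon f hf
    rw [← Multiset.count_pos, Multiset.count_sub] at this
    omega
  have hle : E.filter (fun a => g = c a) ≤ Fe.filter (fun a => g = c a) := by
    rw [Multiset.le_iff_count]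
    intro f
    rw [Multiset.count_filter, Multiset.count_filter]
    split_ifs with hf
    · exact this f hf.symm
    · exact le_rfl
  have := Multiset.card_le_card hle
  rw [Multiset.count_map, Multiset.count_map] at h
  omega

end Collapse

section Interface
variable {V : Type*} [DecidableEq V]

theorem msub_eq {α : Type*} {i1 i2 : DecidableEq α} (s t : Multiset α) :
    @HSub.hSub _ _ _ (@instHSub _ (@Multiset.instSub α i1)) s t =
    @HSub.hSub _ _ _ (@instHSub _ (@Multiset.instSub α i2)) s t := by
  have : i1 = i2 := Subsingleton.elim _ _
  subst this
  rfl

lemma elemConn_le_of_cut' {E : Multiset (Sym2 V)} {T : Set V} {u v : V}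
    {Fv : Finset V} {Fe : Multiset (Sym2 V)} (h1 : (↑Fv : Set V) ⊆ Tᶜ) (h2 : Fe ≤ E)
    (h3 : ¬ Connects (E - Fe) (↑Fv) u v) :
    elemConn E T u v ≤ Fv.card + Multiset.card Fe := by
  refine elemConn_le_of_cut h1 h2 ?_
  rwa [msub_eq] at h3

lemma exists_mincut' (E : Multiset (Sym2 V)) (T : Set V) {u v : V} (huv : u ≠ v) :
    ∃ (Fv : Finset V) (Fe : Multiset (Sym2 V)), (↑Fv : Set V) ⊆ Tᶜ ∧ Fe ≤ E ∧
      elemConn E T u v = Fv.card + Multiset.card Fe ∧ ¬ Connects (E - Fe) (↑Fv) u v := by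
  obtain ⟨Fv, Fe, h1, h2, h3, h4⟩ := exists_mincut E T huv
  exact ⟨Fv, Fe, h1, h2, h3, by rwa [msub_eq] at h4⟩

lemma exists_saturated_mincut' (E : Multiset (Sym2 V)) (T : Set V) {u v : V} (huv : u ≠ v) :
    ∃ (Fv : Finset V) (Fe : Multiset (Sym2 V)), (↑Fv : Set V) ⊆ Tᶜ ∧ Fe ≤ E ∧
      elemConn E T u v = Fv.card + Multiset.card Fe ∧ ¬ Connects (E - Fe) (↑Fv) u v ∧
      ∀ g, Multiset.count g Fe = 0 ∨ Multiset.count g Fe = Multiset.count g E := by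
  obtain ⟨Fv, Fe, h1, h2, h3, h4, h5⟩ := exists_saturated_mincut E T huv
  refine ⟨Fv, Fe, h1, h2, h3, by rwa [msub_eq] at h4, ?_⟩
  intro g
  have h6 := h5 g
  have hc1 : ∀ (i1 i2 : DecidableEq (Sym2 V)) (s : Multiset (Sym2 V)),
      @Multiset.count _ i1 g s = @Multiset.count _ i2 g s := by
    intro i1 i2 s
    have : i1 = i2 := Subsingleton.elim _ _
    subst this
    rfl
  rcases h6 with h6 | h6
  · left; exact (hc1 _ _ Fe).trans h6
  · right; exact ((hc1 _ _ Fe).trans h6).trans (hc1 _ _ E)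

end Interface


section Lift
variable {V : Type*} [DecidableEq V]

lemma contract_sub_lift {E Fe : Multiset (Sym2 V)} {p q : V} {a b : V}
    (hmem : s(a, b) ∈ contractE E p q - contractE Fe p q) :
    ∃ a' b', s(a', b') ∈ E - Fe ∧ collapse p q a' = a ∧ collapse p q b' = b := by
  have hcount : Multiset.count s(a,b) (contractE Fe p q) <
      Multiset.count s(a,b) (contractE E p q) := by
    rw [← Multiset.count_pos, Multiset.count_sub] at hmem; omega
  have hmem' : s(a,b) ∈ contractE E p q := by
    rw [← Multiset.count_pos]; omega
  have hnd : ¬ (s(a,b) : Sym2 V).IsDiag := (Multiset.mem_filter.mp hmem').2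
  have h1 : Multiset.count s(a,b) (contractE E p q) =
      Multiset.count s(a,b) (Multiset.map (Sym2.map (collapse p q)) E) :=
    Multiset.count_filter_of_pos hnd
  have h2 : Multiset.count s(a,b) (contractE Fe p q) =
      Multiset.count s(a,b) (Multiset.map (Sym2.map (collapse p q)) Fe) :=
    Multiset.count_filter_of_pos hnd
  obtain ⟨f, hcf, hfmem⟩ := mem_map_sub (Sym2.map (collapse p q))
    (g := s(a,b)) (E := E) (Fe := Fe) (by omega)
  obtain ⟨a', b', rfl, ha, hb⟩ := sym2_map_decomp hcf
  exact ⟨a', b', hfmem, ha, hb⟩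

lemma lift_connects {E Fe : Multiset (Sym2 V)} {p q : V} {Fv : Set V} {u v : V}
    (hel : s(p, q) ∈ E - Fe) (hpFv : p ∉ Fv) (hqFv : q ∉ Fv)
    (hu : u ≠ p) (hv : v ≠ p) (hvq : v ≠ q) (hvFv : v ∉ Fv)
    (h : Connects (contractE E p q - contractE Fe p q) Fv u v) :
    Connects (E - Fe) Fv u v := by
  have main : ∀ w, Relation.ReflTransGen (Adj (contractE E p q - contractE Fe p q) Fv) u w →
      ∀ b', collapse p q b' = w → b' ∉ Fv → Connects (E - Fe) Fv u b' := by
    intro w hw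
    induction hw with
    | refl =>
      intro b' hb' _
      have : b' = u := collapse_eq_of_ne hb' hu
      subst this
      exact Relation.ReflTransGen.refl
    | @tail m w₀ hab hadj ih =>
      intro b'' hb'' hb''Fv
      obtain ⟨hmem, hmFv, hwFv⟩ := hadj
      obtain ⟨a', b', hf, ha', hb'⟩ := contract_sub_lift hmem
      have ha'Fv : a' ∉ Fv := by
        by_cases hq' : a' = q
        · subst hq'; exact hqFv
        · by_cases hp' : a' = p
          · subst hp'; exact hpFv
          · rw [collapse_ne hq'] at ha'; subst ha'; exact hmFv
      have hb'Fv : b' ∉ Fv := by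
        by_cases hq' : b' = q
        · subst hq'; exact hqFv
        · by_cases hp' : b' = p
          · subst hp'; exact hpFv
          · rw [collapse_ne hq'] at hb'; subst hb'; exact hwFv
      have hconn_b' : Connects (E - Fe) Fv u b' :=
        (ih a' ha' ha'Fv).tail ⟨hf, ha'Fv, hb'Fv⟩
      by_cases heq : b'' = b'
      · subst heq; exact hconn_b'
      · rcases collapse_inj (hb''.trans hb'.symm) heq with ⟨h1, h2⟩ | ⟨h1, h2⟩
        · subst h1; subst h2
          exact hconn_b'.tail ⟨by rwa [Sym2.eq_swap], hqFv, hpFv⟩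
        · subst h1; subst h2
          exact hconn_b'.tail ⟨hel, hpFv, hqFv⟩
  exact main v h v (collapse_ne hvq) hvFv

lemma lift_connects_avoidp {E Fe : Multiset (Sym2 V)} {p q : V} (hpq : p ≠ q)
    {Fv Fv' : Set V} {u v : V}
    (hp' : p ∈ Fv')
    (hsub : ∀ z, z ∈ Fv → z ≠ p → z ≠ q → z ∈ Fv')
    (hu : u ≠ p) (huq : u ≠ q) (huFv : u ∉ Fv)
    (h : Connects (contractE E p q - contractE Fe p q) Fv' u v) :
    Connects (E - Fe) Fv u v := by
  have main : ∀ w, Relation.ReflTransGen (Adj (contractE E p q - contractE Fe p q) Fv') u w →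
      w ≠ p ∧ w ≠ q ∧ w ∉ Fv ∧ Connects (E - Fe) Fv u w := by
    intro w hw
    induction hw with
    | refl => exact ⟨hu, huq, huFv, Relation.ReflTransGen.refl⟩
    | @tail m w₀ hab hadj ih =>
      obtain ⟨hmp, hmq, hmFv, hconn⟩ := ih
      obtain ⟨hmem, hmFv', hwFv'⟩ := hadj
      have hmemc : s(m, w₀) ∈ contractE E p q := by
        rw [← Multiset.count_pos] at hmem ⊢
        rw [Multiset.count_sub] at hmem
        omega
      have hw₀q : w₀ ≠ q := by
        intro hcon
        exact q_not_in_contractE hpq _ hmemc (hcon ▸ Sym2.mem_mk_right m w₀)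
      have hw₀p : w₀ ≠ p := fun hcon => hwFv' (hcon ▸ hp')
      obtain ⟨a', b', hf, ha', hb'⟩ := contract_sub_lift hmem
      have ha'' : a' = m := collapse_eq_of_ne ha' hmp
      have hb'' : b' = w₀ := collapse_eq_of_ne hb' hw₀p
      rw [ha'', hb''] at hf
      have hw₀Fv : w₀ ∉ Fv := fun hcon => hwFv' (hsub _ hcon hw₀p hw₀q)
      exact ⟨hw₀p, hw₀q, hw₀Fv, hconn.tail ⟨hf, hmFv, hw₀Fv⟩⟩
  exact (main v h).2.2.2

lemma push_connects {E₁ E₂ : Multiset (Sym2 V)} {Fv₁ Fv₂ : Set V} {p q : V} {u v : V}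
    (hedge : ∀ f, f ∈ E₁ → ¬ (Sym2.map (collapse p q) f).IsDiag →
      Sym2.map (collapse p q) f ∈ E₂)
    (hv : ∀ z, z ∉ Fv₁ → collapse p q z ∉ Fv₂)
    (h : Connects E₁ Fv₁ u v) :
    Connects E₂ Fv₂ (collapse p q u) (collapse p q v) := by
  induction h with
  | refl => exact Relation.ReflTransGen.refl
  | @tail m w₀ hab hadj ih =>
    obtain ⟨hmem, hmFv, hwFv⟩ := hadj
    by_cases heq : collapse p q m = collapse p q w₀
    · rw [← heq]; exact ih
    · refine ih.tail ⟨?_, hv _ hmFv, hv _ hwFv⟩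
      have := hedge s(m, w₀) hmem (by
        rw [Sym2.map_pair_eq, Sym2.mk_isDiag_iff]; exact heq)
      rwa [Sym2.map_pair_eq] at this

end Lift

section Mono
variable {V : Type*} [DecidableEq V]

lemma elemConn_erase_le (E : Multiset (Sym2 V)) (T : Set V) (e : Sym2 V) {u v : V}
    (huv : u ≠ v) :
    elemConn (E.erase e) T u v ≤ elemConn E T u v := by
  obtain ⟨Fv, Fe, h1, h2, h3, h4⟩ := exists_mincut' E T huv
  have hle : Fe.erase e ≤ E.erase e := Multiset.erase_le_erase e h2
  have h4' : ¬ Connects (E.erase e - Fe.erase e) ↑Fv u v := by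
    intro h; apply h4
    refine connects_mono (fun g hg => ?_) le_rfl h
    rw [← Multiset.count_pos, Multiset.count_sub] at hg ⊢
    have hc := Multiset.count_le_of_le g h2
    by_cases hge : g = e
    · subst hge
      rw [Multiset.count_erase_self, Multiset.count_erase_self] at hg
      omega
    · rw [Multiset.count_erase_of_ne hge, Multiset.count_erase_of_ne hge] at hg
      omega
  have := elemConn_le_of_cut' h1 hle h4'
  have hce : Multiset.card (Fe.erase e) ≤ Multiset.card Fe :=
    Multiset.card_le_card (Multiset.erase_le e Fe)
  omega

lemma contractE_le {E Fe : Multiset (Sym2 V)} (p q : V) (h : Fe ≤ E) :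
    contractE Fe p q ≤ contractE E p q :=
  Multiset.filter_le_filter _ (Multiset.map_le_map h)

lemma contractE_card_le (E : Multiset (Sym2 V)) (p q : V) :
    Multiset.card (contractE E p q) ≤ Multiset.card E := by
  calc Multiset.card (contractE E p q)
      ≤ Multiset.card (E.map (Sym2.map (collapse p q))) :=
        Multiset.card_le_card (Multiset.filter_le _ _)
    _ = Multiset.card E := Multiset.card_map _ _

lemma contractE_card_lt {E : Multiset (Sym2 V)} {p q : V} (hpq : p ≠ q)
    (he : s(p, q) ∈ E) :
    Multiset.card (contractE E p q) < Multiset.card E := by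
  have hdiag : (s(p, p) : Sym2 V) ∈ (E.map (Sym2.map (collapse p q))).filter
      (fun e => e.IsDiag) := by
    rw [Multiset.mem_filter]
    constructor
    · exact Multiset.mem_map.mpr ⟨s(p, q), he, by
        rw [Sym2.map_pair_eq, collapse_ne hpq, collapse_q]⟩
    · simp
  have h1 : Multiset.card ((E.map (Sym2.map (collapse p q))).filter (fun e => e.IsDiag)) +
      Multiset.card (contractE E p q) = Multiset.card E := by
    rw [contractE]
    rw [← Multiset.card_map (Sym2.map (collapse p q)) E]
    rw [← Multiset.card_add]
    congr 1
    exact Multiset.filter_add_not _ _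
  have h2 : 0 < Multiset.card ((E.map (Sym2.map (collapse p q))).filter
      (fun e => e.IsDiag)) := Multiset.card_pos.mpr (fun hz => by simp [hz] at hdiag)
  omega

lemma elemConn_contract_le (E : Multiset (Sym2 V)) (T : Set V) {p q u v : V}
    (hp : p ∉ T) (hq : q ∉ T) (hpq : p ≠ q) (he : s(p, q) ∈ E)
    (hu : u ∈ T) (hv : v ∈ T) (huv : u ≠ v) :
    elemConn (contractE E p q) T u v ≤ elemConn E T u v := by
  obtain ⟨Fv, Fe, h1, h2, h3, h4⟩ := exists_mincut' E T huv
  have hup : u ≠ p := fun h => hp (h ▸ hu)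
  have huq : u ≠ q := fun h => hq (h ▸ hu)
  have hvp : v ≠ p := fun h => hp (h ▸ hv)
  have hvq : v ≠ q := fun h => hq (h ▸ hv)
  have hvFv : v ∉ (↑Fv : Set V) := fun h => (h1 h) hv
  have huFv : u ∉ (↑Fv : Set V) := fun h => (h1 h) hu
  have hcFe_le : contractE Fe p q ≤ contractE E p q := contractE_le p q h2
  have hcFe_card : Multiset.card (contractE Fe p q) ≤ Multiset.card Fe :=
    contractE_card_le Fe p q
  by_cases hA : s(p, q) ∈ E - Fe ∧ p ∉ (↑Fv : Set V) ∧ q ∉ (↑Fv : Set V)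
  · obtain ⟨hel, hpFv, hqFv⟩ := hA
    have h4' : ¬ Connects (contractE E p q - contractE Fe p q) ↑Fv u v := fun h =>
      h4 (lift_connects hel hpFv hqFv hup hvp hvq hvFv h)
    have := elemConn_le_of_cut' h1 hcFe_le h4'
    omega
  · by_cases hB : p ∈ Fv ∨ q ∈ Fv
    · have hsub' : (↑(insert p ((Fv.erase p).erase q)) : Set V) ⊆ Tᶜ := by
        intro z hz
        simp only [Finset.coe_insert, Set.mem_insert_iff, Finset.mem_coe,
          Finset.mem_erase] at hz
        rcases hz with rfl | ⟨_, _, hz⟩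
        · exact hp
        · exact h1 hz
      have hcard' : (insert p ((Fv.erase p).erase q)).card ≤ Fv.card := by
        have e2 : ((Fv.erase p).erase q).card + 1 ≤ Fv.card := by
          rcases hB with hpF | hqF
          · have e3 := Finset.card_erase_of_mem hpF
            have e4 : ((Fv.erase p).erase q).card ≤ (Fv.erase p).card :=
              Finset.card_le_card (Finset.erase_subset _ _)
            have e5 : 0 < Fv.card := Finset.card_pos.mpr ⟨p, hpF⟩
            omega
          · have hqF' : q ∈ Fv.erase p := Finset.mem_erase.mpr ⟨hpq.symm, hqF⟩
            have e3 := Finset.card_erase_of_mem hqF'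
            have e4 : (Fv.erase p).card ≤ Fv.card :=
              Finset.card_le_card (Finset.erase_subset _ _)
            have e5 : 0 < (Fv.erase p).card := Finset.card_pos.mpr ⟨q, hqF'⟩
            omega
        have := Finset.card_insert_le p ((Fv.erase p).erase q)
        omega
      have hcut : ¬ Connects (contractE E p q - contractE Fe p q)
          ↑(insert p ((Fv.erase p).erase q)) u v := by
        intro h
        apply h4
        refine lift_connects_avoidp hpq ?_ ?_ hup huq huFv h
        · simp
        · intro z hz hzp hzq
          simp only [Finset.coe_insert, Set.mem_insert_iff, Finset.mem_coe,
            Finset.mem_erase]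
          exact Or.inr ⟨hzq, hzp, hz⟩
      have := elemConn_le_of_cut' hsub' hcFe_le hcut
      omega
    · push_neg at hB
      obtain ⟨hpFv, hqFv⟩ := hB
      have hpFv' : p ∉ (↑Fv : Set V) := fun h => hpFv (Finset.mem_coe.mp h)
      have hqFv' : q ∉ (↑Fv : Set V) := fun h => hqFv (Finset.mem_coe.mp h)
      have hnotmem : s(p, q) ∉ E - Fe := fun hc => (by
        exact hA ⟨hc, hpFv', hqFv'⟩ : False)
      have hel : s(p, q) ∈ Fe := by
        rw [← Multiset.count_pos]
        rw [← Multiset.count_pos, Multiset.count_sub, not_lt] at hnotmem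
        have h6 : 0 < Multiset.count s(p, q) E := Multiset.count_pos.mpr he
        omega
      have hdiag : (s(p, p) : Sym2 V) ∈ (Fe.map (Sym2.map (collapse p q))).filter
          (fun e => e.IsDiag) := by
        rw [Multiset.mem_filter]
        exact ⟨Multiset.mem_map.mpr ⟨s(p, q), hel, by
          rw [Sym2.map_pair_eq, collapse_ne hpq, collapse_q]⟩, by simp⟩
      have hsplit : Multiset.card ((Fe.map (Sym2.map (collapse p q))).filter
          (fun e => e.IsDiag)) + Multiset.card (contractE Fe p q) = Multiset.card Fe := by
        rw [contractE, ← Multiset.card_map (Sym2.map (collapse p q)) Fe,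
          ← Multiset.card_add]
        congr 1
        exact Multiset.filter_add_not _ _
      have hpos : 0 < Multiset.card ((Fe.map (Sym2.map (collapse p q))).filter
          (fun e => e.IsDiag)) := Multiset.card_pos.mpr (fun hz => by simp [hz] at hdiag)
      have hsub' : (↑(insert p Fv) : Set V) ⊆ Tᶜ := by
        intro z hz
        simp only [Finset.coe_insert, Set.mem_insert_iff, Finset.mem_coe] at hz
        rcases hz with rfl | hz
        · exact hp
        · exact h1 hz
      have hcut : ¬ Connects (contractE E p q - contractE Fe p q) ↑(insert p Fv) u v := by
        intro h
        apply h4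
        refine lift_connects_avoidp hpq ?_ ?_ hup huq huFv h
        · simp
        · intro z hz _ _
          simp only [Finset.coe_insert, Set.mem_insert_iff]
          exact Or.inr hz
      have hb := elemConn_le_of_cut' hsub' hcFe_le hcut
      have hci : (insert p Fv).card ≤ Fv.card + 1 := Finset.card_insert_le _ _
      omega

end Mono

section Gbar
variable {V : Type*} [DecidableEq V]

/-- vertices of the subdivided graph: original vertices plus one vertex per edge copy -/
abbrev Wt (V : Type*) := V ⊕ (Sym2 V × ℕ)

/-- adjacency in the subdivided graph -/
def GAdj (E : Multiset (Sym2 V)) : Wt V → Wt V → Prop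
  | Sum.inl a, Sum.inr gi => a ∈ gi.1 ∧ gi.2 < Multiset.count gi.1 E
  | Sum.inr gi, Sum.inl a => a ∈ gi.1 ∧ gi.2 < Multiset.count gi.1 E
  | _, _ => False

def GStep (E : Multiset (Sym2 V)) (C : Finset (Wt V)) (a b : Wt V) : Prop :=
  GAdj E a b ∧ a ∉ C ∧ b ∉ C

def GReach (E : Multiset (Sym2 V)) (C : Finset (Wt V)) (z : Wt V) : Set (Wt V) :=
  {w | Relation.ReflTransGen (GStep E C) z w}

lemma gadj_symm {E : Multiset (Sym2 V)} {a b : Wt V} (h : GAdj E a b) : GAdj E b a := by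
  cases a <;> cases b <;> simp_all [GAdj]

lemma gstep_symm {E : Multiset (Sym2 V)} {C : Finset (Wt V)} :
    Symmetric (GStep E C) := fun _ _ h => ⟨gadj_symm h.1, h.2.2, h.2.1⟩

lemma greach_refl {E : Multiset (Sym2 V)} {C : Finset (Wt V)} (z : Wt V) :
    z ∈ GReach E C z := Relation.ReflTransGen.refl

lemma greach_symm {E : Multiset (Sym2 V)} {C : Finset (Wt V)} {z w : Wt V}
    (h : w ∈ GReach E C z) : z ∈ GReach E C w :=
  by
    haveI : Std.Symm (GStep E C) := ⟨fun _ _ h => gstep_symm h⟩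
    exact Std.Symm.symm (r := Relation.ReflTransGen (GStep E C)) _ _ h

lemma greach_trans {E : Multiset (Sym2 V)} {C : Finset (Wt V)} {z w w' : Wt V}
    (h : w ∈ GReach E C z) (h' : w' ∈ GReach E C w) : w' ∈ GReach E C z :=
  Relation.ReflTransGen.trans h h'

lemma greach_not_mem {E : Multiset (Sym2 V)} {C : Finset (Wt V)} {z w : Wt V}
    (hz : z ∉ C) (h : w ∈ GReach E C z) : w ∉ C := by
  induction h with
  | refl => exact hz
  | tail _ hstep _ => exact hstep.2.2

lemma greach_mem_of_mem {E : Multiset (Sym2 V)} {C : Finset (Wt V)} {z₁ z₂ w : Wt V}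
    (h1 : w ∈ GReach E C z₁) (h2 : w ∈ GReach E C z₂) : z₂ ∈ GReach E C z₁ :=
  greach_trans h1 (greach_symm h2)

lemma sym2_eq_of_mem_mem {g : Sym2 V} {a b : V} (ha : a ∈ g) (hb : b ∈ g) (hab : a ≠ b) :
    g = s(a, b) := ((Sym2.mem_and_mem_iff hab).mp ⟨ha, hb⟩)

/-- the subdivided-world separator corresponding to a mixed cut -/
def mixedSet (E : Multiset (Sym2 V)) (Fv : Finset V) (Fe : Multiset (Sym2 V)) :
    Finset (Wt V) :=
  (Fv.image Sum.inl) ∪ (Fe.toFinset.biUnion (fun g =>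
    (Finset.range (Multiset.count g E)).image (fun i => Sum.inr (g, i))))

lemma mem_mixedSet_inl {E : Multiset (Sym2 V)} {Fv : Finset V} {Fe : Multiset (Sym2 V)}
    {a : V} : Sum.inl a ∈ mixedSet E Fv Fe ↔ a ∈ Fv := by
  simp [mixedSet]

lemma mem_mixedSet_inr {E : Multiset (Sym2 V)} {Fv : Finset V} {Fe : Multiset (Sym2 V)}
    {g : Sym2 V} {i : ℕ} :
    Sum.inr (g, i) ∈ mixedSet E Fv Fe ↔ g ∈ Fe ∧ i < Multiset.count g E := by
  simp [mixedSet]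

lemma mixedSet_card {E : Multiset (Sym2 V)} {Fv : Finset V} {Fe : Multiset (Sym2 V)}
    (hful : ∀ g ∈ Fe, Multiset.count g E ≤ Multiset.count g Fe) :
    (mixedSet E Fv Fe).card ≤ Fv.card + Multiset.card Fe := by
  have h1 : (Fv.image (Sum.inl : V → Wt V)).card ≤ Fv.card := Finset.card_image_le
  have h2 : (Fe.toFinset.biUnion (fun g =>
      (Finset.range (Multiset.count g E)).image (fun i => (Sum.inr (g, i) : Wt V)))).card ≤
      Multiset.card Fe := by
    calc (Fe.toFinset.biUnion _).card
        ≤ ∑ g ∈ Fe.toFinset, ((Finset.range (Multiset.count g E)).image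
            (fun i => (Sum.inr (g, i) : Wt V))).card := Finset.card_biUnion_le
      _ ≤ ∑ g ∈ Fe.toFinset, Multiset.count g Fe := by
          refine Finset.sum_le_sum (fun g hg => ?_)
          calc ((Finset.range (Multiset.count g E)).image
                (fun i => (Sum.inr (g, i) : Wt V))).card
              ≤ (Finset.range (Multiset.count g E)).card := Finset.card_image_le
            _ = Multiset.count g E := Finset.card_range _
            _ ≤ Multiset.count g Fe := hful g (Multiset.mem_toFinset.mp hg)
      _ = Multiset.card Fe := Multiset.toFinset_sum_count_eq Fe
  calc (mixedSet E Fv Fe).card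
      ≤ (Fv.image (Sum.inl : V → Wt V)).card + (Fe.toFinset.biUnion (fun g =>
        (Finset.range (Multiset.count g E)).image
          (fun i => (Sum.inr (g, i) : Wt V)))).card := Finset.card_union_le _ _
    _ ≤ Fv.card + Multiset.card Fe := add_le_add h1 h2

/-- a reachability path in the subdivided graph avoiding `mixedSet` yields a mixed path -/
lemma mixedSet_blocks {E : Multiset (Sym2 V)} {Fv : Finset V} {Fe : Multiset (Sym2 V)}
    {u v : V} (hu : u ∉ Fv)
    (h : Sum.inl v ∈ GReach E (mixedSet E Fv Fe) (Sum.inl u)) :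
    Connects (E - Fe) ↑Fv u v := by
  set C : Finset (Wt V) := mixedSet E Fv Fe with hC
  have main : ∀ w ∈ GReach E C (Sum.inl u),
      (∀ a : V, w = Sum.inl a → a ∉ Fv ∧ Connects (E - Fe) ↑Fv u a) ∧
      (∀ g i, w = Sum.inr (g, i) → g ∈ E - Fe ∧
        ∃ a, a ∈ g ∧ a ∉ Fv ∧ Connects (E - Fe) ↑Fv u a) := by
    intro w hw
    induction hw with
    | refl =>
      constructor
      · rintro a ha
        cases ha
        exact ⟨hu, Relation.ReflTransGen.refl⟩
      · rintro g i hgi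
        cases hgi
    | @tail m w₀ hab hstep ih =>
      obtain ⟨hadj, hmC, hwC⟩ := hstep
      constructor
      · rintro a rfl
        -- previous must be inr
        match m, hadj with
        | Sum.inr (g, i), hadj =>
          obtain ⟨hmem, ⟨b, hbg, hbFv, hconn⟩⟩ := (ih.2 g i rfl)
          obtain ⟨hag, hcnt⟩ := hadj
          have haFv : a ∉ Fv := fun hc => hwC (hC ▸ mem_mixedSet_inl.mpr hc)
          by_cases hab' : b = a
          · exact ⟨haFv, hab' ▸ hconn⟩
          · have : g = s(b, a) := sym2_eq_of_mem_mem hbg hag hab'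
            exact ⟨haFv, hconn.tail ⟨this ▸ hmem, hbFv, haFv⟩⟩
      · rintro g i rfl
        match m, hadj with
        | Sum.inl a, hadj =>
          obtain ⟨haFv, hconn⟩ := ih.1 a rfl
          obtain ⟨hag, hcnt⟩ := hadj
          have hcnt' : i < Multiset.count g E := hcnt
          have hgFe : g ∉ Fe := by
            intro hc
            exact hwC (hC ▸ mem_mixedSet_inr.mpr ⟨hc, hcnt'⟩)
          have : g ∈ E - Fe := by
            rw [← Multiset.count_pos, Multiset.count_sub]
            have : Multiset.count g Fe = 0 := Multiset.count_eq_zero.mpr hgFe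
            omega
          exact ⟨this, a, hag, haFv, hconn⟩
  exact ((main _ h).1 v rfl).2

end Gbar

section SepLower
variable {V : Type*} [DecidableEq V] [Fintype V]

/-- any removable separator in the subdivided graph bounds `elemConn` from above -/
lemma sep_lower (E : Multiset (Sym2 V)) (T : Set V) {u v : V} (C : Finset (Wt V))
    (hu : u ∈ T) (hv : v ∈ T) (huv : u ≠ v)
    (hC1 : ∀ a : V, Sum.inl a ∈ C → a ∉ T)
    (hC2 : ∀ g i, Sum.inr (g, i) ∈ C → i < Multiset.count g E)
    (hsep : Sum.inl v ∉ GReach E C (Sum.inl u)) :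
    elemConn E T u v ≤ C.card := by
  classical
  let Fv : Finset V := Finset.univ.filter (fun a : V => Sum.inl a ∈ C)
  let f : Wt V → Sym2 V := Sum.elim (fun _ => s(u, u)) Prod.fst
  let CR : Finset (Wt V) := C.filter (fun w => w.isRight)
  let Fe : Multiset (Sym2 V) := CR.val.map f
  have hmemFv : ∀ a : V, a ∈ Fv ↔ Sum.inl a ∈ C := by
    intro a; simp [Fv]
  have hmemCR : ∀ w : Wt V, w ∈ CR ↔ w ∈ C ∧ w.isRight := by
    intro w; simp [CR]
  have hFecard : Multiset.card Fe = CR.card := by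
    show Multiset.card (CR.val.map f) = CR.card
    rw [Multiset.card_map]
    rfl
  have hFvcard : Fv.card ≤ (C.filter (fun w => ¬ w.isRight)).card := by
    refine Finset.card_le_card_of_injOn (fun a => Sum.inl a) ?_ ?_
    · intro a ha
      rw [Finset.mem_coe] at ha ⊢
      rw [hmemFv] at ha
      simp only [Finset.mem_filter]
      exact ⟨ha, by simp⟩
    · intro a _ b _ h
      exact Sum.inl.inj h
  have hsplit : (C.filter (fun w => w.isRight)).card +
      (C.filter (fun w => ¬ w.isRight)).card = C.card :=
    Finset.card_filter_add_card_filter_not _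
  have hcards : Fv.card + Multiset.card Fe ≤ C.card := by
    have : (C.filter (fun w => w.isRight)).card = CR.card := rfl
    omega
  have hcount : ∀ g : Sym2 V, Multiset.count g Fe =
      (CR.filter (fun w => g = f w)).card := by
    intro g
    show Multiset.count g (CR.val.map f) = _
    rw [Multiset.count_map]
    rw [Finset.card_def, Finset.filter_val, Finset.filter_val]
    rfl
  have hfr : ∀ (g : Sym2 V) (i : ℕ), f (Sum.inr (g, i)) = g := fun _ _ => rfl
  have hFeleE : Fe ≤ E := by
    rw [Multiset.le_iff_count]
    intro g
    rw [hcount g]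
    refine le_trans (Finset.card_le_card_of_injOn
      (fun w => match w with | Sum.inr (_, i) => i | Sum.inl _ => 0) ?_ ?_)
      (le_of_eq (Finset.card_range (Multiset.count g E)))
    · intro w hw
      obtain ⟨hwCR, hwf⟩ := Finset.mem_filter.mp hw
      obtain ⟨hwC, hwR⟩ := (hmemCR w).mp hwCR
      match w, hwR with
      | Sum.inr (g', i), _ =>
        have hg' : g' = g := (hwf.trans (hfr g' i)).symm
        subst hg'
        simpa using hC2 g' i hwC
    · intro w hw w' hw' hww
      obtain ⟨hwCR, hwf⟩ := Finset.mem_filter.mp hw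
      obtain ⟨hwCR', hwf'⟩ := Finset.mem_filter.mp hw'
      obtain ⟨hwC, hwR⟩ := (hmemCR w).mp hwCR
      obtain ⟨hwC', hwR'⟩ := (hmemCR w').mp hwCR'
      match w, hwR, w', hwR' with
      | Sum.inr (g1, i), _, Sum.inr (g2, i'), _ =>
        have h1 : g1 = g := (hwf.trans (hfr g1 i)).symm
        have h2 : g2 = g := (hwf'.trans (hfr g2 i')).symm
        have h3 : i = i' := hww
        subst h1; subst h2; subst h3
        rfl
  have hcut : ¬ Connects (E - Fe) ↑Fv u v := by
    intro hpath
    apply hsep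
    have main : ∀ b, Connects (E - Fe) ↑Fv u b → Sum.inl b ∈ GReach E C (Sum.inl u) := by
      intro b hb
      induction hb with
      | refl => exact greach_refl _
      | @tail m w₀ hab hadj ih =>
        obtain ⟨hmem, hmFv, hwFv⟩ := hadj
        have hmC : Sum.inl m ∉ C := fun hc => hmFv ((hmemFv m).mpr hc)
        have hwC : Sum.inl w₀ ∉ C := fun hc => hwFv ((hmemFv w₀).mpr hc)
        have hcnt : Multiset.count s(m, w₀) Fe < Multiset.count s(m, w₀) E := by
          rw [← Multiset.count_pos, Multiset.count_sub] at hmem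
          omega
        have hex : ∃ i, i < Multiset.count s(m, w₀) E ∧ Sum.inr (s(m, w₀), i) ∉ C := by
          by_contra hcon
          push_neg at hcon
          have hle : (Finset.range (Multiset.count s(m, w₀) E)).card ≤
              (CR.filter (fun w => s(m, w₀) = f w)).card := by
            refine Finset.card_le_card_of_injOn
              (fun i => (Sum.inr (s(m, w₀), i) : Wt V)) ?_ ?_
            · intro i hi
              rw [Finset.mem_coe] at hi ⊢
              rw [Finset.mem_range] at hi
              refine Finset.mem_filter.mpr ⟨(hmemCR _).mpr ⟨hcon i hi, by simp⟩, rfl⟩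
            · intro i _ j _ hij
              simpa using hij
          rw [Finset.card_range, ← hcount] at hle
          omega
        obtain ⟨i, hi, hiC⟩ := hex
        have step1 : GStep E C (Sum.inl m) (Sum.inr (s(m, w₀), i)) :=
          ⟨⟨Sym2.mem_mk_left m w₀, hi⟩, hmC, hiC⟩
        have step2 : GStep E C (Sum.inr (s(m, w₀), i)) (Sum.inl w₀) :=
          ⟨⟨Sym2.mem_mk_right m w₀, hi⟩, hiC, hwC⟩
        exact Relation.ReflTransGen.tail (Relation.ReflTransGen.tail ih step1) step2
    exact main v hpath
  have hFvT : (↑Fv : Set V) ⊆ Tᶜ := by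
    intro a ha
    exact hC1 a ((hmemFv a).mp (Finset.mem_coe.mp ha))
  have := elemConn_le_of_cut' hFvT hFeleE hcut
  omega

end SepLower

section Extract
variable {V : Type*} [DecidableEq V] [Fintype V]

lemma msub_filter (E : Multiset (Sym2 V)) (P : Sym2 V → Prop) [DecidablePred P] :
    E - E.filter P = E.filter (fun a => ¬ P a) := by
  ext g
  rw [Multiset.count_sub, Multiset.count_filter, Multiset.count_filter]
  split_ifs with h1 <;> omega

lemma exists_Bstar (E : Multiset (Sym2 V)) (T : Set V) {e : Sym2 V} {s t : V}
    (he : e ∈ E) (hs : s ∈ T) (ht : t ∈ T) (hst : s ≠ t)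
    (hdrop : elemConn (E.erase e) T s t < elemConn E T s t) :
    ∃ B : Finset (Wt V),
      B.card ≤ elemConn E T s t ∧
      (∀ a : V, Sum.inl a ∈ B → a ∉ T) ∧
      (∀ g i, Sum.inr (g, i) ∈ B → i < Multiset.count g E) ∧
      Sum.inr (e, 0) ∈ B ∧
      Sum.inl t ∉ GReach E B (Sum.inl s) := by
  obtain ⟨Bv, Be, h1, h2, h3, h4, h5⟩ := exists_saturated_mincut' (E.erase e) T hst
  have hBeE : Be ≤ E := h2.trans (Multiset.erase_le e E)
  have hcE : 1 ≤ Multiset.count e E := Multiset.one_le_count_iff_mem.mpr he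
  have hkey : Multiset.count e Be = Multiset.count e E - 1 := by
    rcases h5 e with h0 | hfull
    · by_contra hne
      have hge2 : 2 ≤ Multiset.count e E := by
        by_contra hlt
        have : Multiset.count e E = 1 := by omega
        rw [this] at hne
        omega
      have hmem : ∀ g, g ∈ E - Be → g ∈ E.erase e - Be := by
        intro g hg
        rw [← Multiset.count_pos, Multiset.count_sub] at hg ⊢
        by_cases hge : g = e
        · subst hge
          rw [Multiset.count_erase_self]
          omega
        · rw [Multiset.count_erase_of_ne hge]
          omega
      have hcut : ¬ Connects (E - Be) ↑Bv s t := fun h =>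
        h4 (connects_mono hmem le_rfl h)
      have := elemConn_le_of_cut' h1 hBeE hcut
      omega
    · rw [hfull, Multiset.count_erase_self]
  have hful : ∀ g ∈ (e ::ₘ Be), Multiset.count g E ≤ Multiset.count g (e ::ₘ Be) := by
    intro g hg
    by_cases hge : g = e
    · subst hge
      rw [Multiset.count_cons_self]
      omega
    · rw [Multiset.count_cons_of_ne hge]
      have hgBe : g ∈ Be := by
        rcases Multiset.mem_cons.mp hg with h | h
        · exact absurd h hge
        · exact h
      rcases h5 g with h0 | hfull
      · exact absurd (Multiset.count_eq_zero.mp h0) (fun hc => hc hgBe)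
      · rw [hfull, Multiset.count_erase_of_ne hge]
  refine ⟨mixedSet E Bv (e ::ₘ Be), ?_, ?_, ?_, ?_, ?_⟩
  · calc (mixedSet E Bv (e ::ₘ Be)).card ≤ Bv.card + Multiset.card (e ::ₘ Be) :=
        mixedSet_card hful
      _ = Bv.card + Multiset.card Be + 1 := by rw [Multiset.card_cons]; ring
      _ ≤ elemConn E T s t := by omega
  · intro a ha
    exact fun hc => (h1 (Finset.mem_coe.mpr (mem_mixedSet_inl.mp ha))) hc
  · intro g i hgi
    exact (mem_mixedSet_inr.mp hgi).2
  · exact mem_mixedSet_inr.mpr ⟨Multiset.mem_cons_self e Be, by omega⟩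
  · intro hreach
    have hsBv : s ∉ Bv := fun hc => (h1 (Finset.mem_coe.mpr hc)) hs
    have hconn := mixedSet_blocks hsBv hreach
    apply h4
    refine connects_mono ?_ le_rfl hconn
    intro g hg
    rw [← Multiset.count_pos, Multiset.count_sub, Multiset.count_cons] at hg
    rw [← Multiset.count_pos, Multiset.count_sub]
    by_cases hge : g = e
    · exfalso
      rw [if_pos hge, hge] at hg
      omega
    · rw [if_neg hge] at hg
      rw [Multiset.count_erase_of_ne hge]
      omega

lemma connects_erase_isolated {E₀ : Multiset (Sym2 V)} {Fv : Finset V} {q x y : V}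
    (hiso : ∀ g ∈ E₀, q ∉ g)
    (h : Connects E₀ ↑(Fv.erase q) x y) : Connects E₀ ↑Fv x y := by
  have main : ∀ b, Connects E₀ ↑(Fv.erase q) x b → b ≠ q → Connects E₀ ↑Fv x b ∨ x = b := by
    intro b hb
    induction hb with
    | refl => exact fun _ => Or.inr rfl
    | @tail m w₀ hab hadj ih =>
      intro hwq
      obtain ⟨hmem, hmFv, hwFv⟩ := hadj
      have hmq : m ≠ q := fun hc => hiso _ hmem (hc ▸ Sym2.mem_mk_left m w₀)
      have hmFv' : m ∉ (↑Fv : Set V) := by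
        intro hc
        exact hmFv (Finset.mem_coe.mpr (Finset.mem_erase.mpr ⟨hmq, Finset.mem_coe.mp hc⟩))
      have hwFv' : w₀ ∉ (↑Fv : Set V) := by
        intro hc
        exact hwFv (Finset.mem_coe.mpr (Finset.mem_erase.mpr ⟨hwq, Finset.mem_coe.mp hc⟩))
      rcases ih hmq with hconn | rfl
      · exact Or.inl (hconn.tail ⟨hmem, hmFv', hwFv'⟩)
      · exact Or.inl (Relation.ReflTransGen.single ⟨hmem, hmFv', hwFv'⟩)
  by_cases hyq : y = q
  · subst hyq
    -- y = q cannot happen in our uses, but handle: path ending at q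
    rcases (Relation.ReflTransGen.cases_tail h) with heq | ⟨m, hm, hstep⟩
    · exact heq ▸ Relation.ReflTransGen.refl
    · exact absurd (hiso _ hstep.1 (Sym2.mem_mk_right _ _)) (fun hc => hc)
  · rcases main y h hyq with hconn | rfl
    · exact hconn
    · exact Relation.ReflTransGen.refl

lemma exists_Astar (E : Multiset (Sym2 V)) (T : Set V) {p q x y : V}
    (hloop : ∀ g ∈ E, ¬ g.IsDiag)
    (hp : p ∉ T) (hq : q ∉ T) (hpq : p ≠ q) (he : s(p, q) ∈ E)
    (hx : x ∈ T) (hy : y ∈ T) (hxy : x ≠ y)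
    (hdrop : elemConn (contractE E p q) T x y < elemConn E T x y) :
    ∃ A : Finset (Wt V),
      A.card ≤ elemConn E T x y ∧
      (∀ a : V, Sum.inl a ∈ A → a ∉ T) ∧
      (∀ g i, Sum.inr (g, i) ∈ A → i < Multiset.count g E) ∧
      Sum.inl p ∈ A ∧ Sum.inl q ∈ A ∧
      (∀ i, Sum.inr (s(p, q), i) ∉ A) ∧
      Sum.inl y ∉ GReach E A (Sum.inl x) := by
  obtain ⟨Av, Ae, h1, h2, h3, h4, h5⟩ := exists_saturated_mincut' (contractE E p q) T hxy
  have hxp : x ≠ p := fun h => hp (h ▸ hx)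
  have hxq : x ≠ q := fun h => hq (h ▸ hx)
  have hyp : y ≠ p := fun h => hp (h ▸ hy)
  have hyq : y ≠ q := fun h => hq (h ▸ hy)
  have hxAv : x ∉ Av := fun hc => (h1 (Finset.mem_coe.mpr hc)) hx
  have hAe_nd : ∀ g ∈ Ae, ¬ g.IsDiag := by
    intro g hg
    have := Multiset.mem_of_le h2 hg
    exact (Multiset.mem_filter.mp this).2
  -- q is not needed in the vertex part of the cut
  have hqAv : q ∉ Av := by
    intro hqAv
    have hiso : ∀ g ∈ contractE E p q - Ae, q ∉ g := by
      intro g hg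
      have : g ∈ contractE E p q := by
        rw [← Multiset.count_pos, Multiset.count_sub] at hg
        rw [← Multiset.count_pos]
        omega
      exact q_not_in_contractE hpq g this
    have hcut : ¬ Connects (contractE E p q - Ae) ↑(Av.erase q) x y := fun h =>
      h4 (connects_erase_isolated hiso h)
    have hsub : (↑(Av.erase q) : Set V) ⊆ Tᶜ := fun a ha =>
      h1 (Finset.mem_coe.mpr (Finset.mem_of_mem_erase (Finset.mem_coe.mp ha)))
    have := elemConn_le_of_cut' hsub h2 hcut
    have hlt : (Av.erase q).card < Av.card := Finset.card_erase_lt_of_mem hqAv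
    omega
  -- the lifted edge set
  have hfulllift : ∀ g ∈ E.filter (fun f => Sym2.map (collapse p q) f ∈ Ae),
      Multiset.count g E ≤
      Multiset.count g (E.filter (fun f => Sym2.map (collapse p q) f ∈ Ae)) := by
    intro g hg
    rw [Multiset.count_filter]
    rcases Multiset.mem_filter.mp hg with ⟨_, hgp⟩
    rw [if_pos hgp]
  have hliftcard : Multiset.card (E.filter (fun f => Sym2.map (collapse p q) f ∈ Ae)) =
      Multiset.card Ae := by
    have step1 : Multiset.filter (fun g => g ∈ Ae) (E.map (Sym2.map (collapse p q))) =
        Multiset.map (Sym2.map (collapse p q))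
          (E.filter (fun f => Sym2.map (collapse p q) f ∈ Ae)) := by
      rw [Multiset.filter_map]
      rfl
    have step2 : Multiset.filter (fun g => g ∈ Ae) (E.map (Sym2.map (collapse p q))) = Ae := by
      ext g
      rw [Multiset.count_filter]
      by_cases hg : g ∈ Ae
      · rw [if_pos hg]
        have hnd : ¬ g.IsDiag := hAe_nd g hg
        have : Multiset.count g (contractE E p q) =
            Multiset.count g (E.map (Sym2.map (collapse p q))) :=
          Multiset.count_filter_of_pos hnd
        rcases h5 g with h0 | hfull
        · exact absurd (Multiset.count_eq_zero.mp h0) (fun hc => hc hg)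
        · rw [← this, hfull]
      · rw [if_neg hg]
        exact (Multiset.count_eq_zero.mpr hg).symm
    calc Multiset.card (E.filter (fun f => Sym2.map (collapse p q) f ∈ Ae))
        = Multiset.card (Multiset.map (Sym2.map (collapse p q))
            (E.filter (fun f => Sym2.map (collapse p q) f ∈ Ae))) :=
          (Multiset.card_map _ _).symm
      _ = Multiset.card Ae := by rw [← step1, step2]
  have hedge : ∀ f ∈ E - E.filter (fun f => Sym2.map (collapse p q) f ∈ Ae),
      ¬ (Sym2.map (collapse p q) f).IsDiag →
      Sym2.map (collapse p q) f ∈ contractE E p q - Ae := by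
    intro f hf hnd
    rw [msub_filter] at hf
    rcases Multiset.mem_filter.mp hf with ⟨hfE, hfAe⟩
    have hmem : Sym2.map (collapse p q) f ∈ contractE E p q :=
      Multiset.mem_filter.mpr ⟨Multiset.mem_map_of_mem _ hfE, hnd⟩
    rw [← Multiset.count_pos, Multiset.count_sub]
    rw [← Multiset.count_pos] at hmem
    have : Multiset.count (Sym2.map (collapse p q) f) Ae = 0 :=
      Multiset.count_eq_zero.mpr hfAe
    omega
  -- p must be in the vertex part of the cut
  have hpAv : p ∈ Av := by
    by_contra hpAv
    have hcut : ¬ Connects (E - E.filter (fun f => Sym2.map (collapse p q) f ∈ Ae))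
        ↑Av x y := by
      intro hconn
      apply h4
      have hv : ∀ z, z ∉ (↑Av : Set V) → collapse p q z ∉ (↑Av : Set V) := by
        intro z hz
        rcases collapse_mem (p := p) (q := q) (z := z) with h | h
        · rw [h]; exact hz
        · rw [h]; exact fun hc => hpAv (Finset.mem_coe.mp hc)
      have := push_connects hedge hv hconn
      rwa [collapse_ne hxq, collapse_ne hyq] at this
    have := elemConn_le_of_cut' h1 (Multiset.filter_le _ _) hcut
    omega
  -- assemble
  refine ⟨mixedSet E (insert q Av) (E.filter (fun f => Sym2.map (collapse p q) f ∈ Ae)),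
    ?_, ?_, ?_, ?_, ?_, ?_, ?_⟩
  · calc (mixedSet E (insert q Av) _).card
        ≤ (insert q Av).card +
          Multiset.card (E.filter (fun f => Sym2.map (collapse p q) f ∈ Ae)) :=
          mixedSet_card hfulllift
      _ ≤ Av.card + 1 + Multiset.card Ae := by
          have := Finset.card_insert_le q Av
          omega
      _ ≤ elemConn E T x y := by omega
  · intro a ha
    have := mem_mixedSet_inl.mp ha
    rcases Finset.mem_insert.mp this with rfl | hmem
    · exact hq
    · exact h1 (Finset.mem_coe.mpr hmem)
  · intro g i hgi
    exact (mem_mixedSet_inr.mp hgi).2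
  · exact mem_mixedSet_inl.mpr (Finset.mem_insert.mpr (Or.inr hpAv))
  · exact mem_mixedSet_inl.mpr (Finset.mem_insert_self q Av)
  · intro i hi
    have := (mem_mixedSet_inr.mp hi).1
    rcases Multiset.mem_filter.mp this with ⟨_, hAe⟩
    have : ¬ (Sym2.map (collapse p q) s(p, q)).IsDiag := hAe_nd _ hAe
    apply this
    rw [Sym2.map_pair_eq, collapse_ne hpq, collapse_q]
    simp
  · intro hreach
    have hxins : x ∉ insert q Av := by
      intro hc
      rcases Finset.mem_insert.mp hc with h | h
      · exact hxq h
      · exact hxAv h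
    have hconn := mixedSet_blocks hxins hreach
    apply h4
    have hv : ∀ z, z ∉ (↑(insert q Av) : Set V) → collapse p q z ∉ (↑Av : Set V) := by
      intro z hz
      have hzq : z ≠ q := fun hc => hz (by
        rw [hc]
        exact Finset.mem_coe.mpr (Finset.mem_insert_self q Av))
      rw [collapse_ne hzq]
      intro hc
      exact hz (Finset.mem_coe.mpr (Finset.mem_insert.mpr (Or.inr (Finset.mem_coe.mp hc))))
    have := push_connects hedge hv hconn
    rwa [collapse_ne hxq, collapse_ne hyq] at this

end Extract

section KeyCount
variable {V : Type*} [DecidableEq V] [Fintype V]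

lemma three_card {α : Type*} [DecidableEq α] {s1 s2 s3 S : Finset α}
    (h1 : s1 ⊆ S) (h2 : s2 ⊆ S) (h3 : s3 ⊆ S)
    (d12 : Disjoint s1 s2) (d13 : Disjoint s1 s3) (d23 : Disjoint s2 s3) :
    s1.card + s2.card + s3.card ≤ S.card := by
  have e1 : (s1 ∪ s2).card = s1.card + s2.card := Finset.card_union_of_disjoint d12
  have d123 : Disjoint (s1 ∪ s2) s3 := Finset.disjoint_union_left.mpr ⟨d13, d23⟩
  have e2 : ((s1 ∪ s2) ∪ s3).card = (s1 ∪ s2).card + s3.card :=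
    Finset.card_union_of_disjoint d123
  have e3 : (s1 ∪ s2) ∪ s3 ⊆ S := by
    refine Finset.union_subset (Finset.union_subset h1 h2) h3
  have := Finset.card_le_card e3
  omega

lemma cell_reach (E : Multiset (Sym2 V)) (A B : Finset (Wt V)) {z : Wt V}
    (hzA : z ∉ A) (hzB : z ∉ B) :
    ∀ w ∈ GReach E ((A.filter (fun w => w ∈ GReach E B z)) ∪ (A ∩ B) ∪
      (B.filter (fun w => w ∈ GReach E A z))) z,
      w ∈ GReach E A z ∧ w ∈ GReach E B z := by
  intro w hw
  induction hw with
  | refl => exact ⟨greach_refl _, greach_refl _⟩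
  | @tail m w₀ hab hstep ih =>
    obtain ⟨hadj, hmC, hwC⟩ := hstep
    obtain ⟨hmA, hmB⟩ := ih
    have hmA' : m ∉ A := greach_not_mem hzA hmA
    have hmB' : m ∉ B := greach_not_mem hzB hmB
    have hwA : w₀ ∉ A := by
      intro hc
      apply hwC
      by_cases hcB : w₀ ∈ B
      · exact Finset.mem_union.mpr (Or.inl (Finset.mem_union.mpr (Or.inr
          (Finset.mem_inter.mpr ⟨hc, hcB⟩))))
      · have hwB : w₀ ∈ GReach E B z := Relation.ReflTransGen.tail hmB ⟨hadj, hmB', hcB⟩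
        exact Finset.mem_union.mpr (Or.inl (Finset.mem_union.mpr (Or.inl
          (Finset.mem_filter.mpr ⟨hc, hwB⟩))))
    have hwA2 : w₀ ∈ GReach E A z := Relation.ReflTransGen.tail hmA ⟨hadj, hmA', hwA⟩
    have hwB : w₀ ∉ B := by
      intro hc
      exact hwC (Finset.mem_union.mpr (Or.inr (Finset.mem_filter.mpr ⟨hc, hwA2⟩)))
    exact ⟨hwA2, Relation.ReflTransGen.tail hmB ⟨hadj, hmB', hwB⟩⟩

lemma reach_no_pq_copy (E : Multiset (Sym2 V)) (A : Finset (Wt V)) {p q : V} {z : V}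
    (hpA : Sum.inl p ∈ A) (hqA : Sum.inl q ∈ A) :
    ∀ i, Sum.inr (s(p, q), i) ∉ GReach E A (Sum.inl z) := by
  intro i hreach
  rcases Relation.ReflTransGen.cases_tail hreach with heq | ⟨m, _, hstep⟩
  · cases heq
  · obtain ⟨hadj, hmA, _⟩ := hstep
    match m, hadj with
    | Sum.inl a, hadj =>
      have ha : a ∈ s(p, q) := hadj.1
      rcases Sym2.mem_iff.mp ha with rfl | rfl
      · exact hmA hpA
      · exact hmA hqA

lemma key_count (E : Multiset (Sym2 V)) (T : Set V) {p q : V} {z1 u1 z2 u2 : V}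
    (A B : Finset (Wt V))
    (hremA1 : ∀ a : V, Sum.inl a ∈ A → a ∉ T)
    (hremA2 : ∀ g i, Sum.inr (g, i) ∈ A → i < Multiset.count g E)
    (hremB1 : ∀ a : V, Sum.inl a ∈ B → a ∉ T)
    (hremB2 : ∀ g i, Sum.inr (g, i) ∈ B → i < Multiset.count g E)
    (hpA : Sum.inl p ∈ A) (hqA : Sum.inl q ∈ A)
    (hnoe : ∀ i, Sum.inr (s(p, q), i) ∉ A)
    (hw : Sum.inr (s(p, q), 0) ∈ B)
    (hz1 : z1 ∈ T) (hu1 : u1 ∈ T) (hz2 : z2 ∈ T) (hu2 : u2 ∈ T)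
    (hz1u1 : z1 ≠ u1) (hz2u2 : z2 ≠ u2)
    (hdisjA : Sum.inl z2 ∉ GReach E A (Sum.inl z1))
    (hdisjB : Sum.inl z2 ∉ GReach E B (Sum.inl z1))
    (hsep1 : Sum.inl u1 ∉ GReach E A (Sum.inl z1) ∨ Sum.inl u1 ∉ GReach E B (Sum.inl z1))
    (hsep2 : Sum.inl u2 ∉ GReach E A (Sum.inl z2) ∨ Sum.inl u2 ∉ GReach E B (Sum.inl z2)) :
    elemConn E T z1 u1 + elemConn E T z2 u2 + 1 ≤ A.card + B.card := by
  classical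
  have hz1A : (Sum.inl z1 : Wt V) ∉ A := fun hc => (hremA1 z1 hc) hz1
  have hz2A : (Sum.inl z2 : Wt V) ∉ A := fun hc => (hremA1 z2 hc) hz2
  have hz1B : (Sum.inl z1 : Wt V) ∉ B := fun hc => (hremB1 z1 hc) hz1
  have hz2B : (Sum.inl z2 : Wt V) ∉ B := fun hc => (hremB1 z2 hc) hz2
  -- the two cell separators
  let C1 : Finset (Wt V) := (A.filter (fun w => w ∈ GReach E B (Sum.inl z1))) ∪ (A ∩ B) ∪
      (B.filter (fun w => w ∈ GReach E A (Sum.inl z1)))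
  let C2 : Finset (Wt V) := (A.filter (fun w => w ∈ GReach E B (Sum.inl z2))) ∪ (A ∩ B) ∪
      (B.filter (fun w => w ∈ GReach E A (Sum.inl z2)))
  have hC1sub : C1 ⊆ A ∪ B := by
    intro w hw
    rcases Finset.mem_union.mp hw with hw | hw
    · rcases Finset.mem_union.mp hw with hw | hw
      · exact Finset.mem_union.mpr (Or.inl (Finset.mem_filter.mp hw).1)
      · exact Finset.mem_union.mpr (Or.inl (Finset.mem_inter.mp hw).1)
    · exact Finset.mem_union.mpr (Or.inr (Finset.mem_filter.mp hw).1)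
  have hC2sub : C2 ⊆ A ∪ B := by
    intro w hw
    rcases Finset.mem_union.mp hw with hw | hw
    · rcases Finset.mem_union.mp hw with hw | hw
      · exact Finset.mem_union.mpr (Or.inl (Finset.mem_filter.mp hw).1)
      · exact Finset.mem_union.mpr (Or.inl (Finset.mem_inter.mp hw).1)
    · exact Finset.mem_union.mpr (Or.inr (Finset.mem_filter.mp hw).1)
  -- separators
  have hsepC1 : Sum.inl u1 ∉ GReach E C1 (Sum.inl z1) := by
    intro hreach
    have := cell_reach E A B hz1A hz1B _ hreach
    rcases hsep1 with h | h
    · exact h this.1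
    · exact h this.2
  have hsepC2 : Sum.inl u2 ∉ GReach E C2 (Sum.inl z2) := by
    intro hreach
    have := cell_reach E A B hz2A hz2B _ hreach
    rcases hsep2 with h | h
    · exact h this.1
    · exact h this.2
  have hk1 : elemConn E T z1 u1 ≤ C1.card := by
    refine sep_lower E T C1 hz1 hu1 hz1u1 ?_ ?_ hsepC1
    · intro a ha
      rcases Finset.mem_union.mp (hC1sub ha) with h | h
      · exact hremA1 a h
      · exact hremB1 a h
    · intro g i hgi
      rcases Finset.mem_union.mp (hC1sub hgi) with h | h
      · exact hremA2 g i h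
      · exact hremB2 g i h
  have hk2 : elemConn E T z2 u2 ≤ C2.card := by
    refine sep_lower E T C2 hz2 hu2 hz2u2 ?_ ?_ hsepC2
    · intro a ha
      rcases Finset.mem_union.mp (hC2sub ha) with h | h
      · exact hremA1 a h
      · exact hremB1 a h
    · intro g i hgi
      rcases Finset.mem_union.mp (hC2sub hgi) with h | h
      · exact hremA2 g i h
      · exact hremB2 g i h
  -- cardinality bounds
  have hcard1 : C1.card ≤ (A.filter (fun w => w ∈ GReach E B (Sum.inl z1))).card +
      (A ∩ B).card + (B.filter (fun w => w ∈ GReach E A (Sum.inl z1))).card := by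
    calc C1.card ≤ ((A.filter (fun w => w ∈ GReach E B (Sum.inl z1))) ∪ (A ∩ B)).card +
        (B.filter (fun w => w ∈ GReach E A (Sum.inl z1))).card := Finset.card_union_le _ _
      _ ≤ _ := by
          have := Finset.card_union_le (A.filter (fun w => w ∈ GReach E B (Sum.inl z1)))
            (A ∩ B)
          omega
  have hcard2 : C2.card ≤ (A.filter (fun w => w ∈ GReach E B (Sum.inl z2))).card +
      (A ∩ B).card + (B.filter (fun w => w ∈ GReach E A (Sum.inl z2))).card := by
    calc C2.card ≤ ((A.filter (fun w => w ∈ GReach E B (Sum.inl z2))) ∪ (A ∩ B)).card +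
        (B.filter (fun w => w ∈ GReach E A (Sum.inl z2))).card := Finset.card_union_le _ _
      _ ≤ _ := by
          have := Finset.card_union_le (A.filter (fun w => w ∈ GReach E B (Sum.inl z2)))
            (A ∩ B)
          omega
  -- A-side budget
  have hA_budget : (A.filter (fun w => w ∈ GReach E B (Sum.inl z1))).card +
      (A.filter (fun w => w ∈ GReach E B (Sum.inl z2))).card + (A ∩ B).card ≤ A.card := by
    refine three_card (Finset.filter_subset _ _) (Finset.filter_subset _ _)
      (Finset.inter_subset_left) ?_ ?_ ?_
    · rw [Finset.disjoint_left]
      intro w hw1 hw2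
      have h1 := (Finset.mem_filter.mp hw1).2
      have h2 := (Finset.mem_filter.mp hw2).2
      exact hdisjB (greach_mem_of_mem h1 h2)
    · rw [Finset.disjoint_left]
      intro w hw1 hw2
      have h1 := (Finset.mem_filter.mp hw1).2
      exact (greach_not_mem hz1B h1) (Finset.mem_inter.mp hw2).2
    · rw [Finset.disjoint_left]
      intro w hw1 hw2
      have h1 := (Finset.mem_filter.mp hw1).2
      exact (greach_not_mem hz2B h1) (Finset.mem_inter.mp hw2).2
  -- B-side budget (avoiding the distinguished pq-copy)
  have hB_budget : (B.filter (fun w => w ∈ GReach E A (Sum.inl z1))).card +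
      (B.filter (fun w => w ∈ GReach E A (Sum.inl z2))).card + (A ∩ B).card ≤
      (B.erase (Sum.inr (s(p, q), 0))).card := by
    refine three_card ?_ ?_ ?_ ?_ ?_ ?_
    · intro w hw
      rcases Finset.mem_filter.mp hw with ⟨hwB, hwR⟩
      refine Finset.mem_erase.mpr ⟨?_, hwB⟩
      intro hc
      exact (reach_no_pq_copy E A hpA hqA 0) (hc ▸ hwR)
    · intro w hw
      rcases Finset.mem_filter.mp hw with ⟨hwB, hwR⟩
      refine Finset.mem_erase.mpr ⟨?_, hwB⟩
      intro hc
      exact (reach_no_pq_copy E A hpA hqA 0) (hc ▸ hwR)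
    · intro w hw
      rcases Finset.mem_inter.mp hw with ⟨hwA, hwB⟩
      refine Finset.mem_erase.mpr ⟨?_, hwB⟩
      intro hc
      exact (hnoe 0) (hc ▸ hwA)
    · rw [Finset.disjoint_left]
      intro w hw1 hw2
      have h1 := (Finset.mem_filter.mp hw1).2
      have h2 := (Finset.mem_filter.mp hw2).2
      exact hdisjA (greach_mem_of_mem h1 h2)
    · rw [Finset.disjoint_left]
      intro w hw1 hw2
      have h1 := (Finset.mem_filter.mp hw1).2
      exact (greach_not_mem hz1A h1) (Finset.mem_inter.mp hw2).1
    · rw [Finset.disjoint_left]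
      intro w hw1 hw2
      have h1 := (Finset.mem_filter.mp hw1).2
      exact (greach_not_mem hz2A h1) (Finset.mem_inter.mp hw2).1
  have hBerase : (B.erase (Sum.inr (s(p, q), 0))).card = B.card - 1 :=
    Finset.card_erase_of_mem hw
  have hBpos : 1 ≤ B.card := Finset.card_pos.mpr ⟨_, hw⟩
  omega

end KeyCount

section Dichotomy
variable {V : Type*} [DecidableEq V] [Fintype V]

lemma dichotomy (E : Multiset (Sym2 V)) (T : Set V) {p q : V}
    (hloop : ∀ g ∈ E, ¬ g.IsDiag)
    (hp : p ∉ T) (hq : q ∉ T) (hpq : p ≠ q) (he : s(p, q) ∈ E) :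
    (∀ u ∈ T, ∀ v ∈ T, u ≠ v →
      elemConn (E.erase s(p, q)) T u v = elemConn E T u v) ∨
    (∀ u ∈ T, ∀ v ∈ T, u ≠ v →
      elemConn (contractE E p q) T u v = elemConn E T u v) := by
  by_cases hdel : ∀ u ∈ T, ∀ v ∈ T, u ≠ v →
      elemConn (E.erase s(p, q)) T u v = elemConn E T u v
  · exact Or.inl hdel
  · right
    push_neg at hdel
    obtain ⟨s, hs, t, ht, hst, hne⟩ := hdel
    have hdropB : elemConn (E.erase s(p, q)) T s t < elemConn E T s t :=
      lt_of_le_of_ne (elemConn_erase_le E T s(p, q) hst) hne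
    obtain ⟨B, hBcard, hremB1, hremB2, hw, hBst⟩ := exists_Bstar E T he hs ht hst hdropB
    intro x hx y hy hxy
    refine le_antisymm (elemConn_contract_le E T hp hq hpq he hx hy hxy) ?_
    by_contra hgt
    have hdropA : elemConn (contractE E p q) T x y < elemConn E T x y := by omega
    obtain ⟨A, hAcard, hremA1, hremA2, hpA, hqA, hnoe, hAxy⟩ :=
      exists_Astar E T hloop hp hq hpq he hx hy hxy hdropA
    -- abbreviation for reachability between original vertices
    have ineq : ∀ z1 u1 z2 u2 : V, z1 ∈ T → u1 ∈ T → z2 ∈ T → u2 ∈ T →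
        z1 ≠ u1 → z2 ≠ u2 →
        Sum.inl z2 ∉ GReach E A (Sum.inl z1) →
        Sum.inl z2 ∉ GReach E B (Sum.inl z1) →
        (Sum.inl u1 ∉ GReach E A (Sum.inl z1) ∨ Sum.inl u1 ∉ GReach E B (Sum.inl z1)) →
        (Sum.inl u2 ∉ GReach E A (Sum.inl z2) ∨ Sum.inl u2 ∉ GReach E B (Sum.inl z2)) →
        elemConn E T z1 u1 + elemConn E T z2 u2 + 1 ≤
          elemConn E T x y + elemConn E T s t := by
      intro z1 u1 z2 u2 h1 h2 h3 h4 h5 h6 h7 h8 h9 h10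
      have := key_count E T A B hremA1 hremA2 hremB1 hremB2 hpA hqA hnoe hw
        h1 h2 h3 h4 h5 h6 h7 h8 h9 h10
      omega
    -- symmetric reachability helpers
    have hsymA : ∀ a b : V, Sum.inl b ∈ GReach E A (Sum.inl a) →
        Sum.inl a ∈ GReach E A (Sum.inl b) := fun a b h => greach_symm h
    have hsymB : ∀ a b : V, Sum.inl b ∈ GReach E B (Sum.inl a) →
        Sum.inl a ∈ GReach E B (Sum.inl b) := fun a b h => greach_symm h
    -- crossing contradictions
    have crossing : ∀ z2 u2 : V, z2 ∈ T → u2 ∈ T → z2 ≠ u2 →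
        elemConn E T z2 u2 = elemConn E T s t →
        Sum.inl u2 ∉ GReach E B (Sum.inl z2) →
        Sum.inl z2 ∉ GReach E A (Sum.inl x) →
        Sum.inl z2 ∉ GReach E B (Sum.inl x) → False := by
      intro z2 u2 h1 h2 h3 h4 h5 h6 h7
      have := ineq x y z2 u2 hx hy h1 h2 hxy h3 h6 h7 (Or.inl hAxy) (Or.inr h5)
      omega
    -- the four "cells are crossed" facts
    have hall_xs : Sum.inl s ∈ GReach E A (Sum.inl x) ∨
        Sum.inl s ∈ GReach E B (Sum.inl x) := by
      by_contra hc
      push_neg at hc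
      exact crossing s t hs ht hst rfl hBst hc.1 hc.2
    have hall_xt : Sum.inl t ∈ GReach E A (Sum.inl x) ∨
        Sum.inl t ∈ GReach E B (Sum.inl x) := by
      by_contra hc
      push_neg at hc
      refine crossing t s ht hs (Ne.symm hst) (elemConn_comm E T t s) ?_ hc.1 hc.2
      intro hcon
      exact hBst (hsymB t s hcon)
    have hall_ys : Sum.inl s ∈ GReach E A (Sum.inl y) ∨
        Sum.inl s ∈ GReach E B (Sum.inl y) := by
      by_contra hc
      push_neg at hc
      have := ineq y x s t hy hx hs ht (Ne.symm hxy) hst hc.1 hc.2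
        (Or.inl (fun hcon => hAxy (hsymA y x hcon))) (Or.inr hBst)
      rw [elemConn_comm E T y x] at this
      omega
    have hall_yt : Sum.inl t ∈ GReach E A (Sum.inl y) ∨
        Sum.inl t ∈ GReach E B (Sum.inl y) := by
      by_contra hc
      push_neg at hc
      have := ineq y x t s hy hx ht hs (Ne.symm hxy) (Ne.symm hst) hc.1 hc.2
        (Or.inl (fun hcon => hAxy (hsymA y x hcon)))
        (Or.inr (fun hcon => hBst (hsymB t s hcon)))
      rw [elemConn_comm E T y x, elemConn_comm E T t s] at this
      omega
    -- both of x,y cannot A-reach the same vertex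
    have hnotA_both : ∀ z : V, Sum.inl z ∈ GReach E A (Sum.inl x) →
        Sum.inl z ∈ GReach E A (Sum.inl y) → False := by
      intro z h1 h2
      exact hAxy (greach_mem_of_mem h1 h2)
    have hnotB_st : ∀ z : V, Sum.inl s ∈ GReach E B (Sum.inl z) →
        Sum.inl t ∈ GReach E B (Sum.inl z) → False := by
      intro z h1 h2
      exact hBst (greach_trans (hsymB z s h1) h2)
    -- final double-pair contradiction, given the criss-cross configuration
    have double : Sum.inl y ∉ GReach E B (Sum.inl x) →
        Sum.inl t ∉ GReach E A (Sum.inl s) → False := by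
      intro hBxy hAst
      have i1 := ineq x y y x hx hy hy hx hxy (Ne.symm hxy) hAxy hBxy
        (Or.inl hAxy) (Or.inl (fun hcon => hAxy (hsymA y x hcon)))
      have i2 := ineq s t t s hs ht ht hs hst (Ne.symm hst) hAst hBst
        (Or.inr hBst) (Or.inr (fun hcon => hBst (hsymB t s hcon)))
      rw [elemConn_comm E T y x] at i1
      rw [elemConn_comm E T t s] at i2
      omega
    -- case analysis
    by_cases hPBxs : Sum.inl s ∈ GReach E B (Sum.inl x)
    · -- then x cannot B-reach t
      have hnPBxt : Sum.inl t ∉ GReach E B (Sum.inl x) := fun hc => hnotB_st x hPBxs hc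
      have hPAxt : Sum.inl t ∈ GReach E A (Sum.inl x) := hall_xt.resolve_right hnPBxt
      by_cases hPByt : Sum.inl t ∈ GReach E B (Sum.inl y)
      · -- configuration 1 : s with x, t with y (B-sides); t with x (A-side)
        have hnPBys : Sum.inl s ∉ GReach E B (Sum.inl y) := fun hc => hnotB_st y hc hPByt
        have hPAys : Sum.inl s ∈ GReach E A (Sum.inl y) := hall_ys.resolve_right hnPBys
        -- derive : x cannot B-reach y
        have hBxy : Sum.inl y ∉ GReach E B (Sum.inl x) := by
          intro hc
          -- then t ∈ R_B(x) via y
          exact hnPBxt (greach_trans hc hPByt)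
        -- derive : s cannot A-reach t
        have hAst : Sum.inl t ∉ GReach E A (Sum.inl s) := by
          intro hc
          -- t ∈ R_A(s), s ∈ R_A(y) so t ∈ R_A(y); t ∈ R_A(x): contradiction
          exact hnotA_both t hPAxt (greach_trans hPAys hc)
        exact double hBxy hAst
      · have hPAyt : Sum.inl t ∈ GReach E A (Sum.inl y) := hall_yt.resolve_right hPByt
        exact hnotA_both t hPAxt hPAyt
    · have hPAxs : Sum.inl s ∈ GReach E A (Sum.inl x) := hall_xs.resolve_right hPBxs
      have hPBys : Sum.inl s ∈ GReach E B (Sum.inl y) := by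
        rcases hall_ys with h | h
        · exact absurd (hnotA_both s hPAxs h) (fun hc => hc)
        · exact h
      have hnPByt : Sum.inl t ∉ GReach E B (Sum.inl y) := fun hc => hnotB_st y hPBys hc
      have hPAyt : Sum.inl t ∈ GReach E A (Sum.inl y) := hall_yt.resolve_right hnPByt
      by_cases hPAxt : Sum.inl t ∈ GReach E A (Sum.inl x)
      · exact hnotA_both t hPAxt hPAyt
      · have hPBxt : Sum.inl t ∈ GReach E B (Sum.inl x) := hall_xt.resolve_left hPAxt
        -- configuration 2 : s with y, t with x (B-sides); s with x (A-side)
        have hBxy : Sum.inl y ∉ GReach E B (Sum.inl x) := by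
          intro hc
          exact hnotB_st x (greach_trans hc hPBys) hPBxt
        have hAst : Sum.inl t ∉ GReach E A (Sum.inl s) := by
          intro hc
          exact hnotA_both t (greach_trans hPAxs hc) hPAyt
        exact double hBxy hAst

end Dichotomy


end Development

section Main
variable {V : Type*} [Fintype V] [DecidableEq V]

lemma main_aux (T : Set V) :
    ∀ n (E : Multiset (Sym2 V)), Multiset.card E ≤ n → (∀ e ∈ E, ¬ e.IsDiag) →
    ∃ E' : Multiset (Sym2 V),
      Relation.ReflTransGen (RedStepM T) E E' ∧
      (∀ p q : V, s(p, q) ∈ E' → p ∈ T ∨ q ∈ T) ∧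
      ∀ u ∈ T, ∀ v ∈ T, u ≠ v → elemConn E' T u v = elemConn E T u v := by
  intro n
  induction n with
  | zero =>
    intro E hcard hloop
    have hE : E = 0 := Multiset.card_eq_zero.mp (Nat.le_zero.mp hcard)
    subst hE
    exact ⟨0, Relation.ReflTransGen.refl,
      fun p q hmem => absurd hmem (Multiset.notMem_zero _),
      fun u _ v _ _ => rfl⟩
  | succ n ih =>
    intro E hcard hloop
    by_cases hex : ∃ p q : V, p ∉ T ∧ q ∉ T ∧ s(p, q) ∈ E
    · obtain ⟨p, q, hp, hq, he⟩ := hex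
      have hpq : p ≠ q := by
        intro h
        subst h
        exact (hloop _ he) (Sym2.mk_isDiag_iff.mpr rfl)
      have hEpos : 1 ≤ Multiset.card E := by
        have : E ≠ 0 := by
          intro hz
          rw [hz] at he
          exact Multiset.notMem_zero _ he
        have := Multiset.card_pos.mpr this
        omega
      rcases dichotomy E T hloop hp hq hpq he with hpres | hpres
      · have hcard₁ : Multiset.card (E.erase s(p, q)) ≤ n := by
          rw [Multiset.card_erase_of_mem he, Nat.pred_eq_sub_one]
          omega
        have hloop₁ : ∀ e ∈ E.erase s(p, q), ¬ e.IsDiag :=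
          fun e hm => hloop e (Multiset.mem_of_mem_erase hm)
        obtain ⟨E', hrtg, hind, hpres'⟩ := ih (E.erase s(p, q)) hcard₁ hloop₁
        exact ⟨E', Relation.ReflTransGen.head
          (RedStepM.del E p q hp hq hpq he hpres) hrtg, hind,
          fun u hu v hv huv => (hpres' u hu v hv huv).trans (hpres u hu v hv huv)⟩
      · have hcard₁ : Multiset.card (contractE E p q) ≤ n := by
          have := contractE_card_lt hpq he
          omega
        have hloop₁ : ∀ e ∈ contractE E p q, ¬ e.IsDiag :=
          fun e hm => (Multiset.mem_filter.mp hm).2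
        obtain ⟨E', hrtg, hind, hpres'⟩ := ih (contractE E p q) hcard₁ hloop₁
        exact ⟨E', Relation.ReflTransGen.head
          (RedStepM.contr E p q hp hq hpq he hpres) hrtg, hind,
          fun u hu v hv huv => (hpres' u hu v hv huv).trans (hpres u hu v hv huv)⟩
    · push_neg at hex
      refine ⟨E, Relation.ReflTransGen.refl, ?_, fun u _ v _ _ => rfl⟩
      intro p q hmem
      by_contra hc
      push_neg at hc
      exact hex p q hc.1 hc.2 hmem

end Main

/-- **Reduction to an independent set of non-terminals.**  Every element-connectivity
instance can be transformed, by a finite sequence of element-connectivity preserving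
reduction operations, into a graph with no edge joining two non-terminals, with all
pairwise element-connectivities between terminals unchanged. -/
theorem reduce_to_nonterminal_independent {V : Type*} [Fintype V] [DecidableEq V]
    (E : Multiset (Sym2 V)) (T : Set V) (hloop : ∀ e ∈ E, ¬ e.IsDiag) :
    ∃ E' : Multiset (Sym2 V),
      Relation.ReflTransGen (RedStepM T) E E' ∧
      (∀ p q : V, s(p, q) ∈ E' → p ∈ T ∨ q ∈ T) ∧
      ∀ u ∈ T, ∀ v ∈ T, u ≠ v → elemConn E' T u v = elemConn E T u v :=
  main_aux T (Multiset.card E) E le_rfl hloop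

end
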